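/- Let k be a field of characteristic not 2 or 3. The twisted discriminant Δ = 81s₃²-54s₃s₁s₂-3s₁²s₂²+12s₁³s₃+12s₂³ of the cubic x³ - s₁x² + s₂x - s₃ with s₁ = 1/t², s₂ = 1/(3t⁴), s₃ = (1/t⁶ - 6a/t² - 36b + 9a²t²)/36 equals δ² where δ = (-1/t⁶ - 108b - 18a/t² + 27a²t²)/12. -/

import Mathlib

/-! When `s₁² = 3 s₂` the twisted discriminant collapses to a square:
`9 Δ = (27 s₃ - s₁³)²`. The choice `s₁ = 1/t²`, `s₂ = 1/(3t⁴)` satisfies this relation, and then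
`δ = 9 s₃ - s₁³/3`. -/

def twistedDiscriminant {R : Type*} [CommRing R] (s1 s2 s3 : R) : R :=
  81 * s3 ^ 2 - 54 * s3 * s1 * s2 - 3 * s1 ^ 2 * s2 ^ 2 + 12 * s1 ^ 3 * s3 + 12 * s2 ^ 3

theorem nine_mul_twistedDiscriminant_eq_sq {R : Type*} [CommRing R] {s1 s2 : R} (s3 : R)
    (h : s1 ^ 2 = 3 * s2) :
    9 * twistedDiscriminant s1 s2 s3 = (27 * s3 - s1 ^ 3) ^ 2 := by
  unfold twistedDiscriminant
  linear_combination (162 * s1 * s3 - s1 ^ 4 - 3 * s1 ^ 2 * s2 - 36 * s2 ^ 2) * h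

theorem twistedDiscriminant_eq_sq {K : Type*} [Field K] (h3 : (3 : K) ≠ 0) {s1 s2 : K}
    (s3 : K) (h : s1 ^ 2 = 3 * s2) :
    twistedDiscriminant s1 s2 s3 = (9 * s3 - s1 ^ 3 / 3) ^ 2 := by
  have h9 : (9 : K) ≠ 0 := by simpa [show (9 : K) = 3 ^ 2 by norm_num] using h3
  apply mul_left_cancel₀ h9
  rw [nine_mul_twistedDiscriminant_eq_sq s3 h]
  field_simp
  ring

/-- The twisted discriminant of the cubic `x³ - s₁x² + s₂x - s₃` with
`s₁ = 1/t²`, `s₂ = 1/(3t⁴)`, `s₃ = (1/t⁶ - 6a/t² - 36b + 9a²t²)/36` equals `δ²`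
where `δ = (-1/t⁶ - 108b - 18a/t² + 27a²t²)/12`. -/
theorem icart_discriminant_square {k : Type*} [Field k]
    (h2 : (2 : k) ≠ 0) (h3 : (3 : k) ≠ 0)
    (a b t : k) (ht : t ≠ 0)
    (s1 s2 s3 δ : k)
    (hs1 : s1 = 1 / t ^ 2) (hs2 : s2 = 1 / (3 * t ^ 4))
    (hs3 : s3 = (1 / t ^ 6 - 6 * a / t ^ 2 - 36 * b + 9 * a ^ 2 * t ^ 2) / 36)
    (hδ : δ = (-(1 / t ^ 6) - 108 * b - 18 * a / t ^ 2 + 27 * a ^ 2 * t ^ 2) / 12) :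
    81 * s3 ^ 2 - 54 * s3 * s1 * s2 - 3 * s1 ^ 2 * s2 ^ 2
      + 12 * s1 ^ 3 * s3 + 12 * s2 ^ 3 = δ ^ 2 := by
  have hs : s1 ^ 2 = 3 * s2 := by
    rw [hs1, hs2]
    field_simp
  have h12 : (12 : k) ≠ 0 := by simpa [show (12 : k) = 2 ^ 2 * 3 by norm_num] using ⟨h2, h3⟩
  have h36 : (36 : k) ≠ 0 := by simpa [show (36 : k) = 12 * 3 by norm_num] using ⟨h12, h3⟩
  change twistedDiscriminant s1 s2 s3 = δ ^ 2
  rw [twistedDiscriminant_eq_sq h3 s3 hs, hδ, hs3, hs1]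
  congr 1
  field_simp
  ring
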